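/- Let V be a 6-dimensional complex vector space and let ω = α∧σ ∈ ⋀³V, where α ∈ V is nonzero and σ ∈ ⋀²V satisfies α∧σ∧σ ≠ 0. Then the kernel of the linear map ∧ω : V → ⋀⁴V, v ↦ v∧ω, is exactly the line ℂα, and the kernel of the contraction map ⌟ω : V* → ⋀²V, f ↦ f⌟ω, is one-dimensional. -/

import Mathlib

/-!
For `σ ∈ ⋀²V` the contraction `d ⌋ σ` is a vector, and `(d, e) ↦ e (d ⌋ σ)` is skew.

If `v ∧ α ∧ σ = 0` with `v ∉ ℂα`, choose `d` with `d α = 0`, `d v = 1`; then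
`α ∧ σ = v ∧ (d ⌋ (α ∧ σ)) = -v ∧ α ∧ (d ⌋ σ)`, and since `d ⌋ σ` commutes with `σ` this forces
`α ∧ σ ∧ σ = 0`.

Since `α ∧ σ ∧ σ ≠ 0`, `d ⌋ (α ∧ σ) = d α • σ - α ∧ (d ⌋ σ)` vanishes iff `d α = 0` and
`d ⌋ σ ∈ ℂα`. The skew form above is degenerate on the 5-dimensional annihilator of `α`, which
gives such a `d ≠ 0`. Every such `d` also kills the 5-vector `ξ = σ ∧ α ∧ σ`; for two independent
ones `f, g` and vectors `u, w` with `f u = 1`, `g u = 0`, `g w = 1` one has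
`ξ = f ⌋ (g ⌋ (w ∧ u ∧ ξ))`, and `w ∧ u ∧ ξ ∈ ⋀⁷V = 0`.
-/

open ExteriorAlgebra

local infixr:70 " ⌋ " => CliffordAlgebra.contractLeft

theorem exists_dual_apply_eq_zero_apply_eq_one {K V : Type*} [Field K] [AddCommGroup V]
    [Module K V] {a x : V} (hx : x ∉ K ∙ a) : ∃ f : Module.Dual K V, f a = 0 ∧ f x = 1 := by
  obtain ⟨f, hfx, hf⟩ := Submodule.exists_dual_map_eq_bot_of_notMem hx inferInstance
  have hfa : f a ∈ (K ∙ a).map f := Submodule.mem_map_of_mem (Submodule.mem_span_singleton_self a)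
  rw [hf, Submodule.mem_bot] at hfa
  exact ⟨(f x)⁻¹ • f, by simp [hfa], by simp [hfx]⟩

theorem Module.Dual.exists_apply_eq_zero_apply_eq_one {K V : Type*} [Field K] [AddCommGroup V]
    [Module K V] {f g : Module.Dual K V} (h : g ∉ K ∙ f) : ∃ v, f v = 0 ∧ g v = 1 := by
  by_contra! H
  apply h
  have hker : ⨅ _ : Unit, LinearMap.ker f ≤ LinearMap.ker g := by
    intro v hv
    simp only [iInf_const, LinearMap.mem_ker] at hv ⊢
    by_contra hgv
    exact H ((g v)⁻¹ • v) (by simp [hv]) (by simp [hgv])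
  simpa using mem_span_of_iInf_ker_le_ker hker

theorem LinearMap.BilinForm.exists_ne_zero_forall_eq_zero_of_odd {K W : Type*} [Field K]
    [NeZero (2 : K)] [AddCommGroup W] [Module K W] [FiniteDimensional K W]
    (B : LinearMap.BilinForm K W) (hB : ∀ x y, B x y = -B y x)
    (hW : Odd (Module.finrank K W)) : ∃ x ≠ 0, ∀ y, B x y = 0 := by
  by_contra! h
  have hsep : B.SeparatingLeft := fun x hx => by
    by_contra hx0
    obtain ⟨y, hy⟩ := h x hx0
    exact hy (hx y)
  have hnd : B.Nondegenerate := ⟨hsep, fun y hy => hsep y fun x => by rw [hB, hy, neg_zero]⟩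
  let b := Module.finBasis K W
  set A := LinearMap.BilinForm.toMatrix b B
  have hA : A.transpose = -A := by
    ext i j
    simp [A, LinearMap.BilinForm.toMatrix_apply, hB (b j)]
  have hdet := Matrix.det_transpose A
  rw [hA, Matrix.det_neg, Fintype.card_fin, hW.neg_one_pow, neg_one_mul] at hdet
  have h2 : (2 : K) * A.det = 0 := by linear_combination -hdet
  exact (LinearMap.BilinForm.nondegenerate_iff_det_ne_zero b).mp hnd
    ((mul_eq_zero.mp h2).resolve_left two_ne_zero)

namespace ExteriorAlgebra

section CommRing

variable {R M : Type*} [CommRing R] [AddCommGroup M] [Module R M]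

theorem ι_mul_ι_eq_neg_ι_mul_ι (x y : M) : ι R x * ι R y = -(ι R y * ι R x) :=
  eq_neg_of_add_eq_zero_left (ι_add_mul_swap x y)

theorem contractLeft_ι_mul_ι (d : Module.Dual R M) (u v : M) :
    d ⌋ (ι R u * ι R v) = d u • ι R v - d v • ι R u := by
  rw [CliffordAlgebra.contractLeft_ι_mul, CliffordAlgebra.contractLeft_ι,
    Algebra.algebraMap_eq_smul_one, mul_smul_comm, mul_one]

theorem contractLeft_ι_mul_ι_mul_ι (d : Module.Dual R M) (u v w : M) :
    d ⌋ (ι R u * ι R v * ι R w) =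
      d u • (ι R v * ι R w) - d v • (ι R u * ι R w) + d w • (ι R u * ι R v) := by
  rw [mul_assoc, CliffordAlgebra.contractLeft_ι_mul, contractLeft_ι_mul_ι, mul_sub,
    mul_smul_comm, mul_smul_comm]
  abel

theorem ι_mem_exteriorPower_one (x : M) : ι R x ∈ ⋀[R]^1 M := by
  rw [exteriorPower, pow_one]
  exact LinearMap.mem_range_self _ x

@[elab_as_elim]
theorem exteriorPower_two_induction {P : ExteriorAlgebra R M → Prop} {σ : ExteriorAlgebra R M}
    (hσ : σ ∈ ⋀[R]^2 M) (ι_mul_ι : ∀ u v, P (ι R u * ι R v))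
    (add : ∀ x y, P x → P y → P (x + y)) : P σ := by
  rw [exteriorPower, pow_two] at hσ
  exact Submodule.mul_induction_on hσ (by rintro _ ⟨u, rfl⟩ _ ⟨v, rfl⟩; exact ι_mul_ι u v) add

theorem apply_ι_mul_eq_contractLeft
    {T : Module.Dual R M →ₗ[R] ExteriorAlgebra R M →ₗ[R] ExteriorAlgebra R M}
    (hT : ∀ (d : Module.Dual R M) (u v w : M), T d (ι R u * ι R v * ι R w) =
      d u • (ι R v * ι R w) - d v • (ι R u * ι R w) + d w • (ι R u * ι R v))
    {σ : ExteriorAlgebra R M} (hσ : σ ∈ ⋀[R]^2 M) (d : Module.Dual R M) (a : M) :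
    T d (ι R a * σ) = d ⌋ (ι R a * σ) := by
  refine exteriorPower_two_induction hσ (fun u v => ?_) fun y z hy hz => ?_
  · rw [← mul_assoc, hT, contractLeft_ι_mul_ι_mul_ι]
  · rw [mul_add, map_add, map_add, hy, hz]

theorem ι_mul_comm_of_mem_exteriorPower_two {σ : ExteriorAlgebra R M} (hσ : σ ∈ ⋀[R]^2 M)
    (x : M) : ι R x * σ = σ * ι R x := by
  refine exteriorPower_two_induction hσ (fun u v => ?_) fun y z hy hz => ?_
  · rw [← mul_assoc, ι_mul_ι_eq_neg_ι_mul_ι, neg_mul, mul_assoc, ι_mul_ι_eq_neg_ι_mul_ι x v,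
      mul_neg, neg_neg, mul_assoc]
  · rw [mul_add, hy, hz, add_mul]

theorem contractLeft_mem_range_ι_of_mem_exteriorPower_two {σ : ExteriorAlgebra R M}
    (hσ : σ ∈ ⋀[R]^2 M) (d : Module.Dual R M) : d ⌋ σ ∈ LinearMap.range (ι R) := by
  refine exteriorPower_two_induction hσ (fun u v => ?_) fun y z hy hz => ?_
  · exact ⟨d u • v - d v • u, by simp [contractLeft_ι_mul_ι]⟩
  · rw [map_add]; exact add_mem hy hz

theorem contractLeft_mul_of_mem_exteriorPower_two {σ : ExteriorAlgebra R M}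
    (hσ : σ ∈ ⋀[R]^2 M) (d : Module.Dual R M) (x : ExteriorAlgebra R M) :
    d ⌋ (σ * x) = (d ⌋ σ) * x + σ * (d ⌋ x) := by
  refine exteriorPower_two_induction hσ (fun u v => ?_) fun y z hy hz => ?_
  · rw [mul_assoc, CliffordAlgebra.contractLeft_ι_mul, CliffordAlgebra.contractLeft_ι_mul,
      contractLeft_ι_mul_ι]
    simp only [mul_sub, sub_mul, mul_smul_comm, smul_mul_assoc, mul_assoc]
    abel
  · rw [add_mul, map_add, map_add, hy, hz, add_mul, add_mul]; abel

theorem contractLeft_ι_mul_eq_self {d : Module.Dual R M} {u : M} {x : ExteriorAlgebra R M}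
    (hdu : d u = 1) (hdx : d ⌋ x = 0) : d ⌋ (ι R u * x) = x := by
  rw [CliffordAlgebra.contractLeft_ι_mul, hdu, hdx, one_smul, mul_zero, sub_zero]

theorem eq_ι_mul_contractLeft_of_ι_mul_eq_zero {d : Module.Dual R M} {u : M}
    {x : ExteriorAlgebra R M} (hdu : d u = 1) (h : ι R u * x = 0) : x = ι R u * (d ⌋ x) := by
  have := CliffordAlgebra.contractLeft_ι_mul d u x
  rwa [h, map_zero, hdu, one_smul, eq_comm, sub_eq_zero] at this

theorem eq_contractLeft_contractLeft_ι_mul_ι_mul {d e : Module.Dual R M} {u w : M}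
    {x : ExteriorAlgebra R M} (hdx : d ⌋ x = 0) (hex : e ⌋ x = 0) (hdu : d u = 1)
    (heu : e u = 0) (hew : e w = 1) : x = d ⌋ (e ⌋ (ι R w * (ι R u * x))) := by
  have heux : e ⌋ (ι R u * x) = 0 := by
    rw [CliffordAlgebra.contractLeft_ι_mul, heu, hex, zero_smul, mul_zero, sub_zero]
  rw [contractLeft_ι_mul_eq_self hew heux, contractLeft_ι_mul_eq_self hdu hdx]

noncomputable def contractLeftVec (σ : ExteriorAlgebra R M) : Module.Dual R M →ₗ[R] M :=
  ιInv ∘ₗ (CliffordAlgebra.contractLeft (Q := (0 : QuadraticForm R M))).flip σ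

theorem ι_contractLeftVec {σ : ExteriorAlgebra R M} (hσ : σ ∈ ⋀[R]^2 M) (d : Module.Dual R M) :
    ι R (contractLeftVec σ d) = d ⌋ σ := by
  obtain ⟨x, hx⟩ := contractLeft_mem_range_ι_of_mem_exteriorPower_two hσ d
  change ι R (ιInv (d ⌋ σ)) = d ⌋ σ
  rw [← hx, ι_leftInverse x]

theorem apply_contractLeftVec {σ : ExteriorAlgebra R M} (hσ : σ ∈ ⋀[R]^2 M)
    (d e : Module.Dual R M) : d (contractLeftVec σ e) = -e (contractLeftVec σ d) := by
  rw [← algebraMap_inj (M := M), map_neg, ← CliffordAlgebra.contractLeft_ι,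
    ← CliffordAlgebra.contractLeft_ι, ι_contractLeftVec hσ, ι_contractLeftVec hσ,
    CliffordAlgebra.contractLeft_comm]

end CommRing

section Field

variable {K V : Type*} [Field K] [AddCommGroup V] [Module K V]

theorem exteriorPower_eq_bot_of_finrank_lt [FiniteDimensional K V] {n : ℕ}
    (h : Module.finrank K V < n) : ⋀[K]^n V = ⊥ :=
  Submodule.finrank_eq_zero.mp (by rw [exteriorPower.finrank_eq, Nat.choose_eq_zero_of_lt h])

variable {α : V} {σ : ExteriorAlgebra K V}

theorem apply_eq_zero_and_ι_mul_contractLeft_eq_zero (hασσ : ι K α * σ * σ ≠ 0)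
    {d : Module.Dual K V} (hd : d ⌋ (ι K α * σ) = 0) : d α = 0 ∧ ι K α * (d ⌋ σ) = 0 := by
  rw [CliffordAlgebra.contractLeft_ι_mul, sub_eq_zero] at hd
  have hdα : d α = 0 := by
    by_contra hdα
    have hασ : ι K α * σ = 0 := by
      rw [← inv_smul_smul₀ hdα σ, hd, mul_smul_comm, ← mul_assoc, ι_sq_zero, zero_mul,
        smul_zero]
    exact hασσ (by rw [hασ, zero_mul])
  exact ⟨hdα, by rw [← hd, hdα, zero_smul]⟩

theorem mem_span_singleton_of_ι_mul_ι_mul_eq_zero (hσ : σ ∈ ⋀[K]^2 V)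
    (hασσ : ι K α * σ * σ ≠ 0) {v : V} (hv : ι K v * (ι K α * σ) = 0) : v ∈ K ∙ α := by
  by_contra hvα
  obtain ⟨d, hdα, hdv⟩ := exists_dual_apply_eq_zero_apply_eq_one hvα
  obtain ⟨x, hx⟩ := contractLeft_mem_range_ι_of_mem_exteriorPower_two hσ d
  have hω := eq_ι_mul_contractLeft_of_ι_mul_eq_zero hdv hv
  rw [CliffordAlgebra.contractLeft_ι_mul, hdα, zero_smul, zero_sub, ← hx] at hω
  apply hασσ
  calc ι K α * σ * σ = -(ι K v * ι K α * (ι K x * σ)) := by rw [hω]; noncomm_ring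
    _ = -(ι K v * (ι K α * σ) * ι K x) := by
      rw [ι_mul_comm_of_mem_exteriorPower_two hσ]; noncomm_ring
    _ = 0 := by rw [hv, zero_mul, neg_zero]

theorem exists_ne_zero_contractLeft_ι_mul_eq_zero [NeZero (2 : K)] [FiniteDimensional K V]
    (hV : Even (Module.finrank K V)) (hα : α ≠ 0) (hσ : σ ∈ ⋀[K]^2 V) :
    ∃ f : Module.Dual K V, f ≠ 0 ∧ f ⌋ (ι K α * σ) = 0 := by
  set A := (K ∙ α).dualAnnihilator
  have hA : Odd (Module.finrank K A) := by
    have h : Module.finrank K (K ∙ α) + Module.finrank K A = Module.finrank K V :=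
      Subspace.finrank_add_finrank_dualAnnihilator_eq _
    rw [finrank_span_singleton hα] at h
    obtain ⟨k, hk⟩ := hV
    exact ⟨k - 1, by omega⟩
  have mem_A (h : Module.Dual K V) (hh : h α = 0) : h ∈ A :=
    (Submodule.mem_dualAnnihilator _).2 fun w hw => by
      obtain ⟨c, rfl⟩ := Submodule.mem_span_singleton.mp hw
      simp [hh]
  let B : LinearMap.BilinForm K A :=
    ((Module.Dual.eval K V) ∘ₗ contractLeftVec σ).compl₁₂ A.subtype A.subtype
  obtain ⟨⟨f, hfA⟩, hf0, hf⟩ :=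
    LinearMap.BilinForm.exists_ne_zero_forall_eq_zero_of_odd (W := A) B
      (fun g h => by simpa [B] using apply_contractLeftVec hσ h g) hA
  have hfα : f α = 0 :=
    (Submodule.mem_dualAnnihilator _).1 hfA α (Submodule.mem_span_singleton_self α)
  have hmf : contractLeftVec σ f ∈ K ∙ α := by
    by_contra hn
    obtain ⟨h, hhα, hh⟩ := exists_dual_apply_eq_zero_apply_eq_one hn
    simpa [B, hh] using hf ⟨h, mem_A h hhα⟩
  obtain ⟨c, hc⟩ := Submodule.mem_span_singleton.mp hmf
  refine ⟨f, fun h => hf0 (Subtype.ext h), ?_⟩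
  rw [CliffordAlgebra.contractLeft_ι_mul, ← ι_contractLeftVec hσ, ← hc, hfα, zero_smul, zero_sub,
    map_smul, mul_smul_comm, ι_sq_zero, smul_zero, neg_zero]

theorem mem_span_singleton_of_contractLeft_ι_mul_eq_zero [FiniteDimensional K V]
    (hV : Module.finrank K V ≤ 6) (hσ : σ ∈ ⋀[K]^2 V) (hασσ : ι K α * σ * σ ≠ 0)
    {f g : Module.Dual K V} (hf0 : f ≠ 0) (hf : f ⌋ (ι K α * σ) = 0)
    (hg : g ⌋ (ι K α * σ) = 0) : g ∈ K ∙ f := by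
  by_contra hgf
  obtain ⟨w, -, hgw⟩ := Module.Dual.exists_apply_eq_zero_apply_eq_one hgf
  have hfg : f ∉ K ∙ g := fun hfg => by
    obtain ⟨c, rfl⟩ := Submodule.mem_span_singleton.mp hfg
    have hc : c ≠ 0 := by rintro rfl; exact hf0 (zero_smul K g)
    exact hgf (Submodule.mem_span_singleton.mpr ⟨c⁻¹, inv_smul_smul₀ hc g⟩)
  obtain ⟨u, hgu, hfu⟩ := Module.Dual.exists_apply_eq_zero_apply_eq_one hfg
  have hξ : ι K α * σ * σ = σ * (ι K α * σ) := by
    rw [← mul_assoc, ι_mul_comm_of_mem_exteriorPower_two hσ]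
  have hcontract : ∀ d : Module.Dual K V, d ⌋ (ι K α * σ) = 0 → d ⌋ (σ * (ι K α * σ)) = 0 := by
    intro d hd
    obtain ⟨-, hdσ⟩ := apply_eq_zero_and_ι_mul_contractLeft_eq_zero hασσ hd
    obtain ⟨x, hx⟩ := contractLeft_mem_range_ι_of_mem_exteriorPower_two hσ d
    rw [contractLeft_mul_of_mem_exteriorPower_two hσ, hd, mul_zero, add_zero, ← hx, ← mul_assoc,
      ι_mul_ι_eq_neg_ι_mul_ι, hx, hdσ, neg_zero, zero_mul]
  have h7 : ι K w * (ι K u * (σ * (ι K α * σ))) ∈ ⋀[K]^7 V :=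
    SetLike.mul_mem_graded (ι_mem_exteriorPower_one w) <|
      SetLike.mul_mem_graded (ι_mem_exteriorPower_one u) <| SetLike.mul_mem_graded hσ <|
        SetLike.mul_mem_graded (ι_mem_exteriorPower_one α) hσ
  rw [exteriorPower_eq_bot_of_finrank_lt (by omega), Submodule.mem_bot] at h7
  apply hασσ
  rw [hξ, eq_contractLeft_contractLeft_ι_mul_ι_mul (hcontract f hf) (hcontract g hg) hfu hgu hgw,
    h7, map_zero, map_zero]

end Field

end ExteriorAlgebra

/-- for a 6-dimensional complex `V` and `ω = α∧σ` with `α ≠ 0` and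
`α∧σ∧σ ≠ 0`, the kernel of `v ↦ v∧ω` is exactly the line `ℂα`, and the kernel of the
contraction `f ↦ f⌟ω` on `V*` is one-dimensional.  Here `K` is the contraction operation,
characterized on decomposables by `f⌟(u∧v∧w) = f(u) v∧w − f(v) u∧w + f(w) u∧v`. -/
theorem stmt5 {V : Type*} [AddCommGroup V] [Module ℂ V] [FiniteDimensional ℂ V]
    (hV : Module.finrank ℂ V = 6)
    (K : Module.Dual ℂ V →ₗ[ℂ] ExteriorAlgebra ℂ V →ₗ[ℂ] ExteriorAlgebra ℂ V)
    (hK : ∀ (f : Module.Dual ℂ V) (u v w : V),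
      K f (ι ℂ u * ι ℂ v * ι ℂ w) =
        f u • (ι ℂ v * ι ℂ w) - f v • (ι ℂ u * ι ℂ w) + f w • (ι ℂ u * ι ℂ v))
    (α : V) (hα : α ≠ 0) (σ : ExteriorAlgebra ℂ V) (hσmem : σ ∈ ⋀[ℂ]^2 V)
    (ω : ExteriorAlgebra ℂ V) (hω : ω = ι ℂ α * σ)
    (hασσ : ι ℂ α * σ * σ ≠ 0) :
    (∀ v : V, ι ℂ v * ω = 0 ↔ v ∈ Submodule.span ℂ {α}) ∧
    (∃ f : Module.Dual ℂ V, f ≠ 0 ∧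
      ∀ g : Module.Dual ℂ V, K g ω = 0 ↔ ∃ c : ℂ, g = c • f) := by
  subst hω
  have hKω (g : Module.Dual ℂ V) : K g (ι ℂ α * σ) = g ⌋ (ι ℂ α * σ) :=
    apply_ι_mul_eq_contractLeft hK hσmem g α
  refine ⟨fun v => ⟨mem_span_singleton_of_ι_mul_ι_mul_eq_zero hσmem hασσ, fun hv => ?_⟩, ?_⟩
  · obtain ⟨c, rfl⟩ := Submodule.mem_span_singleton.mp hv
    rw [map_smul, smul_mul_assoc, ← mul_assoc, ι_sq_zero, zero_mul, smul_zero]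
  obtain ⟨f, hf0, hf⟩ := exists_ne_zero_contractLeft_ι_mul_eq_zero (by rw [hV]; decide) hα hσmem
  refine ⟨f, hf0, fun g => ⟨fun hg => ?_, ?_⟩⟩
  · rw [hKω] at hg
    obtain ⟨c, hc⟩ := Submodule.mem_span_singleton.mp
      (mem_span_singleton_of_contractLeft_ι_mul_eq_zero hV.le hσmem hασσ hf0 hf hg)
    exact ⟨c, hc.symm⟩
  · rintro ⟨c, rfl⟩
    rw [hKω, map_smul, LinearMap.smul_apply, hf, smul_zero]
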